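/- Let p > 3 be a prime, and for the hypergeometric datum α = {1/2,1/2,1/6,5/6}, β = {1,1,1/3,2/3}, let e(k) := 2(−⌊1/2 − k/(p−1)⌋) + (−⌊1/6 − k/(p−1)⌋) + (−⌊5/6 − k/(p−1)⌋) − 2⌊k/(p−1)⌋ − ⌊k/(p−1) + 1/3⌋ − ⌊k/(p−1) + 2/3⌋ for integers 0 ≤ k ≤ p−2. Then e(k) ≥ 0 for all such k, and e(k) = 0 if and only if 0 ≤ k ≤ (p−1)/6 or (p−1)/3 ≤ k ≤ (p−1)/2. In particular s(α,β) = 0 and the bottom interval I(α,β) = [0,(p−1)/6] ∪ [(p−1)/3,(p−1)/2] is a union of two disjoint intervals. -/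
import Mathlib


/-- The step function `e(k)` for the hypergeometric datum
`α = {1/2,1/2,1/6,5/6}`, `β = {1,1,1/3,2/3}`. -/
def e7 (p k : ℕ) : ℤ :=
  2 * (-⌊(1 / 2 : ℚ) - (k : ℚ) / ((p : ℚ) - 1)⌋) +
    (-⌊(1 / 6 : ℚ) - (k : ℚ) / ((p : ℚ) - 1)⌋) +
    (-⌊(5 / 6 : ℚ) - (k : ℚ) / ((p : ℚ) - 1)⌋) -
    2 * ⌊(k : ℚ) / ((p : ℚ) - 1)⌋ -
    ⌊(k : ℚ) / ((p : ℚ) - 1) + 1 / 3⌋ -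
    ⌊(k : ℚ) / ((p : ℚ) - 1) + 2 / 3⌋

private lemma floor_eq_of (r : ℚ) (n : ℤ) (h1 : (n : ℚ) ≤ r) (h2 : r < n + 1) :
    ⌊r⌋ = n := Int.floor_eq_iff.mpr ⟨h1, h2⟩

set_option maxHeartbeats 1000000 in
/-- For `α = {1/2,1/2,1/6,5/6}`, `β = {1,1,1/3,2/3}` and a prime `p > 3`:
`e(k) ≥ 0` for all `0 ≤ k ≤ p-2`, with equality exactly when
`0 ≤ k ≤ (p-1)/6` or `(p-1)/3 ≤ k ≤ (p-1)/2`.  In particular `s(α,β) = 0` and the bottom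
set `I(α,β) = [0,(p-1)/6] ∪ [(p-1)/3,(p-1)/2]` is a union of two disjoint intervals. -/
theorem e7_bottom (p : ℕ) (hp : p.Prime) (hp3 : 3 < p) (k : ℕ) (hk : k ≤ p - 2) :
    0 ≤ e7 p k ∧
      (e7 p k = 0 ↔
        (0 ≤ (k : ℚ) ∧ (k : ℚ) ≤ ((p : ℚ) - 1) / 6) ∨
        (((p : ℚ) - 1) / 3 ≤ (k : ℚ) ∧ (k : ℚ) ≤ ((p : ℚ) - 1) / 2)) := by
  have hp4 : 4 ≤ p := hp3
  have hpq : (4 : ℚ) ≤ (p : ℚ) := by exact_mod_cast hp4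
  have hq : (0 : ℚ) < (p : ℚ) - 1 := by linarith
  have hk2 : (k : ℚ) ≤ (p : ℚ) - 2 := by
    have h1 : (k : ℚ) ≤ ((p - 2 : ℕ) : ℚ) := by exact_mod_cast hk
    have h2 : ((p - 2 : ℕ) : ℚ) = (p : ℚ) - 2 := by
      have : 2 ≤ p := by omega
      push_cast [this]; ring
    linarith [h2 ▸ h1]
  set x : ℚ := (k : ℚ) / ((p : ℚ) - 1) with hxdef
  have hkx : (k : ℚ) = x * ((p : ℚ) - 1) := (div_mul_cancel₀ _ hq.ne').symm
  have hx0 : 0 ≤ x := div_nonneg (by positivity) hq.le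
  have hx1 : x < 1 := by
    rw [hxdef, div_lt_one hq]; linarith
  have hkpos : (0 : ℚ) ≤ (k : ℚ) := by positivity
  have he : e7 p k =
      2 * (-⌊(1 / 2 : ℚ) - x⌋) + (-⌊(1 / 6 : ℚ) - x⌋) + (-⌊(5 / 6 : ℚ) - x⌋)
        - 2 * ⌊x⌋ - ⌊x + 1 / 3⌋ - ⌊x + 2 / 3⌋ := rfl
  have hfx : ⌊x⌋ = 0 := floor_eq_of _ 0 (by push_cast; linarith) (by push_cast; linarith)
  rcases le_or_gt x (1 / 6) with h1 | h1
  · -- case x ≤ 1/6 : e = 0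
    have f1 : ⌊(1 / 2 : ℚ) - x⌋ = 0 := floor_eq_of _ 0 (by push_cast; linarith) (by push_cast; linarith)
    have f2 : ⌊(1 / 6 : ℚ) - x⌋ = 0 := floor_eq_of _ 0 (by push_cast; linarith) (by push_cast; linarith)
    have f3 : ⌊(5 / 6 : ℚ) - x⌋ = 0 := floor_eq_of _ 0 (by push_cast; linarith) (by push_cast; linarith)
    have f4 : ⌊x + 1 / 3⌋ = 0 := floor_eq_of _ 0 (by push_cast; linarith) (by push_cast; linarith)
    have f5 : ⌊x + 2 / 3⌋ = 0 := floor_eq_of _ 0 (by push_cast; linarith) (by push_cast; linarith)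
    have hE : e7 p k = 0 := by rw [he, f1, f2, f3, f4, f5, hfx]; norm_num
    refine ⟨hE.ge, ?_⟩
    rw [hE]
    refine iff_of_true rfl (Or.inl ⟨hkpos, ?_⟩)
    have hm : 0 ≤ (1 / 6 - x) * ((p : ℚ) - 1) := mul_nonneg (by linarith) hq.le
    rw [hkx]; linarith
  rcases lt_or_ge x (1 / 3) with h2 | h2
  · -- case 1/6 < x < 1/3 : e = 1
    have f1 : ⌊(1 / 2 : ℚ) - x⌋ = 0 := floor_eq_of _ 0 (by push_cast; linarith) (by push_cast; linarith)
    have f2 : ⌊(1 / 6 : ℚ) - x⌋ = -1 := floor_eq_of _ (-1) (by push_cast; linarith) (by push_cast; linarith)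
    have f3 : ⌊(5 / 6 : ℚ) - x⌋ = 0 := floor_eq_of _ 0 (by push_cast; linarith) (by push_cast; linarith)
    have f4 : ⌊x + 1 / 3⌋ = 0 := floor_eq_of _ 0 (by push_cast; linarith) (by push_cast; linarith)
    have f5 : ⌊x + 2 / 3⌋ = 0 := floor_eq_of _ 0 (by push_cast; linarith) (by push_cast; linarith)
    have hE : e7 p k = 1 := by rw [he, f1, f2, f3, f4, f5, hfx]; norm_num
    refine ⟨by rw [hE]; norm_num, ?_⟩
    rw [hE]
    refine iff_of_false (by norm_num) ?_
    rintro (⟨_, h⟩ | ⟨h, _⟩) <;> rw [hkx] at h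
    · have hm : 0 < (x - 1 / 6) * ((p : ℚ) - 1) := mul_pos (by linarith) hq
      linarith
    · have hm : 0 < (1 / 3 - x) * ((p : ℚ) - 1) := mul_pos (by linarith) hq
      linarith
  rcases le_or_gt x (1 / 2) with h3 | h3
  · -- case 1/3 ≤ x ≤ 1/2 : e = 0
    have f1 : ⌊(1 / 2 : ℚ) - x⌋ = 0 := floor_eq_of _ 0 (by push_cast; linarith) (by push_cast; linarith)
    have f2 : ⌊(1 / 6 : ℚ) - x⌋ = -1 := floor_eq_of _ (-1) (by push_cast; linarith) (by push_cast; linarith)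
    have f3 : ⌊(5 / 6 : ℚ) - x⌋ = 0 := floor_eq_of _ 0 (by push_cast; linarith) (by push_cast; linarith)
    have f4 : ⌊x + 1 / 3⌋ = 0 := floor_eq_of _ 0 (by push_cast; linarith) (by push_cast; linarith)
    have f5 : ⌊x + 2 / 3⌋ = 1 := floor_eq_of _ 1 (by push_cast; linarith) (by push_cast; linarith)
    have hE : e7 p k = 0 := by rw [he, f1, f2, f3, f4, f5, hfx]; norm_num
    refine ⟨hE.ge, ?_⟩
    rw [hE]
    refine iff_of_true rfl (Or.inr ⟨?_, ?_⟩)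
    · have hm : 0 ≤ (x - 1 / 3) * ((p : ℚ) - 1) := mul_nonneg (by linarith) hq.le
      rw [hkx]; linarith
    · have hm : 0 ≤ (1 / 2 - x) * ((p : ℚ) - 1) := mul_nonneg (by linarith) hq.le
      rw [hkx]; linarith
  rcases lt_or_ge x (2 / 3) with h4 | h4
  · -- case 1/2 < x < 2/3 : e = 2
    have f1 : ⌊(1 / 2 : ℚ) - x⌋ = -1 := floor_eq_of _ (-1) (by push_cast; linarith) (by push_cast; linarith)
    have f2 : ⌊(1 / 6 : ℚ) - x⌋ = -1 := floor_eq_of _ (-1) (by push_cast; linarith) (by push_cast; linarith)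
    have f3 : ⌊(5 / 6 : ℚ) - x⌋ = 0 := floor_eq_of _ 0 (by push_cast; linarith) (by push_cast; linarith)
    have f4 : ⌊x + 1 / 3⌋ = 0 := floor_eq_of _ 0 (by push_cast; linarith) (by push_cast; linarith)
    have f5 : ⌊x + 2 / 3⌋ = 1 := floor_eq_of _ 1 (by push_cast; linarith) (by push_cast; linarith)
    have hE : e7 p k = 2 := by rw [he, f1, f2, f3, f4, f5, hfx]; norm_num
    refine ⟨by rw [hE]; norm_num, ?_⟩
    rw [hE]
    refine iff_of_false (by norm_num) ?_
    rintro (⟨_, h⟩ | ⟨_, h⟩) <;> rw [hkx] at h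
    · have hm : 0 < (x - 1 / 6) * ((p : ℚ) - 1) := mul_pos (by linarith) hq
      linarith
    · have hm : 0 < (x - 1 / 2) * ((p : ℚ) - 1) := mul_pos (by linarith) hq
      linarith
  rcases le_or_gt x (5 / 6) with h5 | h5
  · -- case 2/3 ≤ x ≤ 5/6 : e = 1
    have f1 : ⌊(1 / 2 : ℚ) - x⌋ = -1 := floor_eq_of _ (-1) (by push_cast; linarith) (by push_cast; linarith)
    have f2 : ⌊(1 / 6 : ℚ) - x⌋ = -1 := floor_eq_of _ (-1) (by push_cast; linarith) (by push_cast; linarith)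
    have f3 : ⌊(5 / 6 : ℚ) - x⌋ = 0 := floor_eq_of _ 0 (by push_cast; linarith) (by push_cast; linarith)
    have f4 : ⌊x + 1 / 3⌋ = 1 := floor_eq_of _ 1 (by push_cast; linarith) (by push_cast; linarith)
    have f5 : ⌊x + 2 / 3⌋ = 1 := floor_eq_of _ 1 (by push_cast; linarith) (by push_cast; linarith)
    have hE : e7 p k = 1 := by rw [he, f1, f2, f3, f4, f5, hfx]; norm_num
    refine ⟨by rw [hE]; norm_num, ?_⟩
    rw [hE]
    refine iff_of_false (by norm_num) ?_
    rintro (⟨_, h⟩ | ⟨_, h⟩) <;> rw [hkx] at h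
    · have hm : 0 < (x - 1 / 6) * ((p : ℚ) - 1) := mul_pos (by linarith) hq
      linarith
    · have hm : 0 < (x - 1 / 2) * ((p : ℚ) - 1) := mul_pos (by linarith) hq
      linarith
  · -- case 5/6 < x < 1 : e = 2
    have f1 : ⌊(1 / 2 : ℚ) - x⌋ = -1 := floor_eq_of _ (-1) (by push_cast; linarith) (by push_cast; linarith)
    have f2 : ⌊(1 / 6 : ℚ) - x⌋ = -1 := floor_eq_of _ (-1) (by push_cast; linarith) (by push_cast; linarith)
    have f3 : ⌊(5 / 6 : ℚ) - x⌋ = -1 := floor_eq_of _ (-1) (by push_cast; linarith) (by push_cast; linarith)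
    have f4 : ⌊x + 1 / 3⌋ = 1 := floor_eq_of _ 1 (by push_cast; linarith) (by push_cast; linarith)
    have f5 : ⌊x + 2 / 3⌋ = 1 := floor_eq_of _ 1 (by push_cast; linarith) (by push_cast; linarith)
    have hE : e7 p k = 2 := by rw [he, f1, f2, f3, f4, f5, hfx]; norm_num
    refine ⟨by rw [hE]; norm_num, ?_⟩
    rw [hE]
    refine iff_of_false (by norm_num) ?_
    rintro (⟨_, h⟩ | ⟨_, h⟩) <;> rw [hkx] at h
    · have hm : 0 < (x - 1 / 6) * ((p : ℚ) - 1) := mul_pos (by linarith) hq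
      linarith
    · have hm : 0 < (x - 1 / 2) * ((p : ℚ) - 1) := mul_pos (by linarith) hq
      linarith
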